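/- arXiv:2605.18224 — 3 statements merged into one kernel-verified Lean document; each statement's English description precedes it below -/
import Mathlib

section
/- Let T ∈ Δ_K have full support and let T̄ ∈ Δ_K have full support. Define the centered log-odds r_k = log(T_k/T̄_k) − (1/K) Σ_j log(T_j/T̄_j) and the code z_T = ((K−1)/(Kβ)) Σ_k r_k v_k, where v_1,…,v_K are regular simplex vertices and β > 0. Then the fixed witness S_k(z) = softmax_k(β v_k·z + log T̄_k) satisfies S(z_T) = T exactly, i.e. KL(T ‖ S(z_T)) = 0. -/
open Finset

/-- Dot product on `Fin n → ℝ`. -/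
def dot {n : ℕ} (u v : Fin n → ℝ) : ℝ := ∑ i, u i * v i

/-- KL divergence between two finite probability vectors. -/
noncomputable def KL {K : ℕ} (p q : Fin K → ℝ) : ℝ :=
  ∑ k, p k * Real.log (p k / q k)

/-!
The Gram matrix of the regular simplex is `K/(K-1) · I - 1/(K-1) · 𝟙𝟙ᵀ`, so it acts as
`K/(K-1)` times the identity on vectors with zero sum, such as the centered log-odds `r`.
Hence `β v_k · z_T = r_k = log T_k - log T̄_k - c` with `c` independent of `k`, and the logits
of `S(z_T)` are `log T_k - c`; a softmax is invariant under a common shift of its logits, so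
it returns `T`, which already sums to one.
-/

lemma dot_sum_smul {n : ℕ} {ι : Type*} (s : Finset ι) (u : Fin n → ℝ) (r : ι → ℝ)
    (v : ι → Fin n → ℝ) : dot u (∑ j ∈ s, r j • v j) = ∑ j ∈ s, r j * dot u (v j) := by
  change u ⬝ᵥ _ = ∑ j ∈ s, r j * u ⬝ᵥ v j
  simp only [dotProduct_sum, dotProduct_smul, smul_eq_mul]

lemma dot_smul {n : ℕ} (u w : Fin n → ℝ) (a : ℝ) : dot u (a • w) = a * dot u w :=
  dotProduct_smul a u w

lemma sum_sub_mean_eq_zero {K : ℕ} (hK : (K : ℝ) ≠ 0) (f : Fin K → ℝ) :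
    ∑ k, (f k - (1 / (K : ℝ)) * ∑ j, f j) = 0 := by
  rw [sum_sub_distrib, sum_const, card_univ, Fintype.card_fin, nsmul_eq_mul]
  field_simp
  ring

lemma dot_sum_smul_of_simplex {K n : ℕ} (hK : (K : ℝ) ≠ 1) (v : Fin K → Fin n → ℝ)
    (hvnorm : ∀ i, dot (v i) (v i) = 1)
    (hvcross : ∀ i j, i ≠ j → dot (v i) (v j) = -1 / ((K : ℝ) - 1))
    (r : Fin K → ℝ) (hr : ∑ j, r j = 0) (k : Fin K) :
    dot (v k) (∑ j, r j • v j) = (K : ℝ) / ((K : ℝ) - 1) * r k := by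
  have hK1 : (K : ℝ) - 1 ≠ 0 := sub_ne_zero.mpr hK
  have hrest : ∑ j ∈ univ.erase k, r j = -r k := by
    linarith [add_sum_erase univ r (mem_univ k)]
  rw [dot_sum_smul, ← add_sum_erase _ _ (mem_univ k), hvnorm k,
    sum_congr rfl fun j hj => by rw [hvcross k j (ne_of_mem_erase hj).symm],
    ← sum_mul, hrest]
  field_simp
  ring

lemma exp_log_add_div_sum_exp_log_add {K : ℕ} (p : Fin K → ℝ) (hp0 : ∀ k, 0 < p k)
    (hp1 : ∑ k, p k = 1) (c : ℝ) (k : Fin K) :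
    Real.exp (Real.log (p k) + c) / ∑ j, Real.exp (Real.log (p j) + c) = p k := by
  simp only [Real.exp_add, Real.exp_log (hp0 _), ← sum_mul, hp1, one_mul]
  exact mul_div_cancel_right₀ _ (Real.exp_ne_zero c)

lemma KL_self {K : ℕ} (p : Fin K → ℝ) : KL p p = 0 := by
  simp [KL]

theorem simplex_log_odds_inverse_general {K dz : ℕ} (hK : 2 ≤ K)
    (β : ℝ) (hβ : 0 < β)
    (v : Fin K → Fin dz → ℝ)
    (hvnorm : ∀ i, dot (v i) (v i) = 1)
    (hvcross : ∀ i j, i ≠ j → dot (v i) (v j) = -1 / ((K : ℝ) - 1))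
    (T Tbar : Fin K → ℝ)
    (hT0 : ∀ k, 0 < T k) (hT1 : ∑ k, T k = 1)
    (hTbar0 : ∀ k, 0 < Tbar k)
    (r : Fin K → ℝ)
    (hr : ∀ k, r k = Real.log (T k / Tbar k) - (1 / (K : ℝ)) * ∑ j, Real.log (T j / Tbar j))
    (zT : Fin dz → ℝ)
    (hzT : zT = (((K : ℝ) - 1) / ((K : ℝ) * β)) • ∑ k, r k • v k)
    (S : (Fin dz → ℝ) → Fin K → ℝ)
    (hS : ∀ z k, S z k =
      Real.exp (β * dot (v k) z + Real.log (Tbar k)) /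
        ∑ j, Real.exp (β * dot (v j) z + Real.log (Tbar j))) :
    (∀ k, S zT k = T k) ∧ KL T (S zT) = 0 := by
  have hK1 : (1 : ℝ) < K := by exact_mod_cast hK
  have hr0 : ∑ k, r k = 0 := by
    simp only [hr]
    exact sum_sub_mean_eq_zero (by positivity) _
  set c := (1 / (K : ℝ)) * ∑ j, Real.log (T j / Tbar j)
  have hlogit : ∀ k, β * dot (v k) zT + Real.log (Tbar k) = Real.log (T k) + -c := by
    intro k
    rw [hzT, dot_smul, dot_sum_smul_of_simplex hK1.ne' v hvnorm hvcross r hr0 k, hr k,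
      Real.log_div (hT0 k).ne' (hTbar0 k).ne']
    field_simp [(by linarith : (K : ℝ) - 1 ≠ 0)]
    ring
  have hST : ∀ k, S zT k = T k := fun k => by
    simp only [hS, hlogit]
    exact exp_log_add_div_sum_exp_log_add T hT0 hT1 _ k
  refine ⟨hST, ?_⟩
  rw [show S zT = T from funext hST]
  exact KL_self T

/-- Simplex log-odds inverse: the analytic code `z_T` built from the centered log-odds of a
full-support teacher `T` against `T̄` satisfies `S(z_T) = T` exactly, where
`S_k(z) = softmax_k(β v_k·z + log T̄_k)`; hence `KL(T ‖ S(z_T)) = 0`. -/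
theorem simplex_log_odds_inverse {K dz : ℕ} (hK : 2 ≤ K) (hd : K - 1 ≤ dz)
    (β : ℝ) (hβ : 0 < β)
    (v : Fin K → Fin dz → ℝ)
    (hvsum : ∑ k, v k = 0)
    (hvnorm : ∀ i, dot (v i) (v i) = 1)
    (hvcross : ∀ i j, i ≠ j → dot (v i) (v j) = -1 / ((K : ℝ) - 1))
    (T Tbar : Fin K → ℝ)
    (hT0 : ∀ k, 0 < T k) (hT1 : ∑ k, T k = 1)
    (hTbar0 : ∀ k, 0 < Tbar k) (hTbar1 : ∑ k, Tbar k = 1)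
    (r : Fin K → ℝ)
    (hr : ∀ k, r k = Real.log (T k / Tbar k) - (1 / (K : ℝ)) * ∑ j, Real.log (T j / Tbar j))
    (zT : Fin dz → ℝ)
    (hzT : zT = (((K : ℝ) - 1) / ((K : ℝ) * β)) • ∑ k, r k • v k)
    (S : (Fin dz → ℝ) → Fin K → ℝ)
    (hS : ∀ z k, S z k =
      Real.exp (β * dot (v k) z + Real.log (Tbar k)) /
        ∑ j, Real.exp (β * dot (v j) z + Real.log (Tbar j))) :
    (∀ k, S zT k = T k) ∧ KL T (S zT) = 0 :=
  simplex_log_odds_inverse_general hK β hβ v hvnorm hvcross T Tbar hT0 hT1 hTbar0 r hr zT hzT S hS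
end

section
/- For full-support T, T̄ ∈ Δ_K, the function α ↦ KL(T ‖ S_α) is nonincreasing on [0,1], where S_α(k) = T_k^α T̄_k^{1−α} / Σ_j T_j^α T̄_j^{1−α}. Proof sketch: with A(α) = log Σ_j T̄_j exp(α ℓ_j) and ℓ_k = log(T_k/T̄_k), A is convex (A'' equals a variance), A'(α) = E_{S_α}[ℓ], and d/dα KL(T‖S_α) = A'(α) − E_T[ℓ] = A'(α) − A'(1) ≤ 0. -/
open Finset

/-- Monotonicity along the geometric path: for full-support `T, T̄ ∈ Δ_K`, the map
`α ↦ KL(T ‖ S_α)`, with `S_α(k) = T_k^α T̄_k^{1−α} / ∑_j T_j^α T̄_j^{1−α}`,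
is nonincreasing on `[0,1]`. -/
theorem KL_path_antitone {K : ℕ} (hK : 2 ≤ K)
    (T Tbar : Fin K → ℝ)
    (hT0 : ∀ k, 0 < T k) (hT1 : ∑ k, T k = 1)
    (hTbar0 : ∀ k, 0 < Tbar k) (hTbar1 : ∑ k, Tbar k = 1)
    (Sα : ℝ → Fin K → ℝ)
    (hSα : ∀ α k, Sα α k =
      T k ^ α * Tbar k ^ (1 - α) / ∑ j, T j ^ α * Tbar j ^ (1 - α)) :
    AntitoneOn (fun α => KL T (Sα α)) (Set.Icc (0 : ℝ) 1) := by
  haveI : Nonempty (Fin K) := ⟨⟨0, by omega⟩⟩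
  set C := ∑ k, T k * Real.log (T k / Tbar k) with hCdef
  set Z : ℝ → ℝ := fun γ => ∑ j, T j ^ γ * Tbar j ^ (1 - γ) with hZdef
  have hxpos : ∀ (γ : ℝ) (j : Fin K), 0 < T j ^ γ * Tbar j ^ (1 - γ) := fun γ j =>
    mul_pos (Real.rpow_pos_of_pos (hT0 j) _) (Real.rpow_pos_of_pos (hTbar0 j) _)
  have hZpos : ∀ γ : ℝ, 0 < Z γ := fun γ =>
    Finset.sum_pos (fun j _ => hxpos γ j) Finset.univ_nonempty
  -- KL formula
  have hKL : ∀ γ : ℝ, KL T (Sα γ) = (1 - γ) * C + Real.log (Z γ) := by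
    intro γ
    have hterm : ∀ k : Fin K, T k * Real.log (T k / Sα γ k) =
        (1 - γ) * (T k * Real.log (T k / Tbar k)) + T k * Real.log (Z γ) := by
      intro k
      have h1 : Sα γ k = (T k ^ γ * Tbar k ^ (1 - γ)) / Z γ := hSα γ k
      rw [h1, Real.log_div (ne_of_gt (hT0 k)) (ne_of_gt (div_pos (hxpos γ k) (hZpos γ))),
        Real.log_div (ne_of_gt (hxpos γ k)) (ne_of_gt (hZpos γ)),
        Real.log_mul (ne_of_gt (Real.rpow_pos_of_pos (hT0 k) _))
          (ne_of_gt (Real.rpow_pos_of_pos (hTbar0 k) _)),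
        Real.log_rpow (hT0 k), Real.log_rpow (hTbar0 k),
        Real.log_div (ne_of_gt (hT0 k)) (ne_of_gt (hTbar0 k))]
      ring
    calc KL T (Sα γ) = ∑ k, ((1 - γ) * (T k * Real.log (T k / Tbar k)) + T k * Real.log (Z γ)) := by
          unfold KL; exact Finset.sum_congr rfl fun k _ => hterm k
      _ = (1 - γ) * C + (∑ k, T k) * Real.log (Z γ) := by
          rw [Finset.sum_add_distrib, ← Finset.mul_sum, ← Finset.sum_mul, hCdef]
      _ = (1 - γ) * C + Real.log (Z γ) := by rw [hT1, one_mul]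
  -- Jensen lower bound on log Z
  have hJensen : ∀ γ : ℝ, -((1 - γ) * C) ≤ Real.log (Z γ) := by
    intro γ
    set y : Fin K → ℝ := fun j => T j ^ (γ - 1) * Tbar j ^ (1 - γ) with hy
    have hypos : ∀ j, 0 < y j := fun j =>
      mul_pos (Real.rpow_pos_of_pos (hT0 j) _) (Real.rpow_pos_of_pos (hTbar0 j) _)
    have hsum : ∑ j, T j * y j = Z γ := by
      refine Finset.sum_congr rfl fun j _ => ?_
      have : T j * T j ^ (γ - 1) = T j ^ γ := by
        rw [show γ = 1 + (γ - 1) by ring, Real.rpow_add (hT0 j), Real.rpow_one]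
        ring_nf
      simp only [hy]
      rw [← mul_assoc, this]
    have key : ∑ j, T j * Real.log (y j / Z γ) ≤ 0 := by
      have h1 : ∀ j : Fin K, T j * Real.log (y j / Z γ) ≤ T j * (y j / Z γ - 1) := fun j =>
        mul_le_mul_of_nonneg_left (Real.log_le_sub_one_of_pos (div_pos (hypos j) (hZpos γ)))
          (hT0 j).le
      have h2 : ∑ j, T j * (y j / Z γ - 1) = 0 := by
        have : ∑ j, T j * (y j / Z γ - 1) = (∑ j, T j * y j) / Z γ - ∑ j, T j := by
          rw [Finset.sum_div, ← Finset.sum_sub_distrib]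
          exact Finset.sum_congr rfl fun j _ => by ring
        rw [this, hsum, div_self (ne_of_gt (hZpos γ)), hT1, sub_self]
      calc ∑ j, T j * Real.log (y j / Z γ) ≤ ∑ j, T j * (y j / Z γ - 1) :=
            Finset.sum_le_sum fun j _ => h1 j
        _ = 0 := h2
    have hlogy : ∀ j : Fin K, Real.log (y j) = -((1 - γ) * Real.log (T j / Tbar j)) := by
      intro j
      simp only [hy]
      rw [Real.log_mul (ne_of_gt (Real.rpow_pos_of_pos (hT0 j) _))
          (ne_of_gt (Real.rpow_pos_of_pos (hTbar0 j) _)),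
        Real.log_rpow (hT0 j), Real.log_rpow (hTbar0 j),
        Real.log_div (ne_of_gt (hT0 j)) (ne_of_gt (hTbar0 j))]
      ring
    have expand : ∑ j, T j * Real.log (y j / Z γ) =
        -((1 - γ) * C) - Real.log (Z γ) := by
      have : ∀ j : Fin K, T j * Real.log (y j / Z γ) =
          -((1 - γ) * (T j * Real.log (T j / Tbar j))) - T j * Real.log (Z γ) := by
        intro j
        rw [Real.log_div (ne_of_gt (hypos j)) (ne_of_gt (hZpos γ)), hlogy j]
        ring
      rw [Finset.sum_congr rfl fun j _ => this j, Finset.sum_sub_distrib,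
        ← Finset.sum_mul, hT1, one_mul]
      congr 1
      simp only [← neg_mul]
      rw [← Finset.mul_sum, hCdef]
    linarith [key, expand.symm.trans_le key]
  -- main argument
  intro a ha b hb hab
  simp only
  rw [hKL a, hKL b]
  rcases eq_or_lt_of_le hab with rfl | hlt
  · exact le_rfl
  have ha1 : a < 1 := lt_of_lt_of_le hlt hb.2
  have h1a : (0:ℝ) < 1 - a := by linarith
  set l : ℝ := (1 - b) / (1 - a) with hldef
  have hl0 : 0 ≤ l := div_nonneg (by linarith [hb.2]) h1a.le
  have hl1 : l ≤ 1 := by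
    rw [div_le_one h1a]; linarith
  have hla : l * (1 - a) = 1 - b := div_mul_cancel₀ _ (ne_of_gt h1a)
  -- Hölder: Z b ≤ Z a ^ l
  have hHolder : Z b ≤ Z a ^ l := by
    have hterm : ∀ j : Fin K, T j ^ b * Tbar j ^ (1 - b) =
        ((T j ^ a * Tbar j ^ (1 - a)) / Z a) ^ l * T j ^ (1 - l) * Z a ^ l := by
      intro j
      rw [Real.div_rpow (hxpos a j).le (hZpos a).le,
        Real.mul_rpow (Real.rpow_pos_of_pos (hT0 j) a).le
          (Real.rpow_pos_of_pos (hTbar0 j) _).le,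
        ← Real.rpow_mul (hT0 j).le, ← Real.rpow_mul (hTbar0 j).le]
      have e1 : (1 - a) * l = 1 - b := by rw [mul_comm]; exact hla
      have e2 : T j ^ (a * l) * T j ^ (1 - l) = T j ^ b := by
        rw [← Real.rpow_add (hT0 j)]
        congr 1
        have : a * l + (1 - l) = a * l + (1 - a * l - (1 - a) * l) := by ring
        rw [this, e1]; ring
      have hZl : (0:ℝ) < Z a ^ l := Real.rpow_pos_of_pos (hZpos a) l
      rw [e1, div_mul_eq_mul_div, div_mul_cancel₀ _ (ne_of_gt hZl), ← e2]
      ring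
    have hAM : ∀ j : Fin K,
        ((T j ^ a * Tbar j ^ (1 - a)) / Z a) ^ l * T j ^ (1 - l) ≤
          l * ((T j ^ a * Tbar j ^ (1 - a)) / Z a) + (1 - l) * T j := fun j =>
      Real.geom_mean_le_arith_mean2_weighted hl0 (by linarith)
        (div_pos (hxpos a j) (hZpos a)).le (hT0 j).le (by ring)
    have hsumAM : ∑ j, ((T j ^ a * Tbar j ^ (1 - a)) / Z a) ^ l * T j ^ (1 - l) ≤ 1 := by
      calc ∑ j, ((T j ^ a * Tbar j ^ (1 - a)) / Z a) ^ l * T j ^ (1 - l)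
          ≤ ∑ j, (l * ((T j ^ a * Tbar j ^ (1 - a)) / Z a) + (1 - l) * T j) :=
            Finset.sum_le_sum fun j _ => hAM j
        _ = l * ((∑ j, T j ^ a * Tbar j ^ (1 - a)) / Z a) + (1 - l) * ∑ j, T j := by
            rw [Finset.sum_add_distrib, ← Finset.mul_sum, ← Finset.mul_sum, Finset.sum_div]
        _ = 1 := by
            rw [hT1, div_self (ne_of_gt (hZpos a))]
            ring
    have : Z b = (∑ j, ((T j ^ a * Tbar j ^ (1 - a)) / Z a) ^ l * T j ^ (1 - l)) * Z a ^ l := by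
      rw [Finset.sum_mul]
      exact Finset.sum_congr rfl fun j _ => hterm j
    rw [this]
    calc (∑ j, ((T j ^ a * Tbar j ^ (1 - a)) / Z a) ^ l * T j ^ (1 - l)) * Z a ^ l
        ≤ 1 * Z a ^ l :=
          mul_le_mul_of_nonneg_right hsumAM (Real.rpow_pos_of_pos (hZpos a) l).le
      _ = Z a ^ l := one_mul _
  have hlogZb : Real.log (Z b) ≤ l * Real.log (Z a) := by
    calc Real.log (Z b) ≤ Real.log (Z a ^ l) := Real.log_le_log (hZpos b) hHolder
      _ = l * Real.log (Z a) := Real.log_rpow (hZpos a) l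
  have hJa := hJensen a
  have h2 : (1 - l) * (1 - a) = b - a := by rw [sub_mul, one_mul, hla]; ring
  have h3 : -((b - a) * C) ≤ (1 - l) * Real.log (Z a) := by
    calc -((b - a) * C) = (1 - l) * -((1 - a) * C) := by rw [← h2]; ring
      _ ≤ (1 - l) * Real.log (Z a) :=
        mul_le_mul_of_nonneg_left hJa (by linarith)
  linarith [hlogZb, h3]
end

section
/- Combining the perturbation identity with the curvature bound: for the simplex witness S with gain β and regular simplex vertices v_k, and for any μ, the alignment loss satisfies KL(T ‖ S(z_T + d)) ≤ (β²/2) Σ_k (v_k·d)² ≤ (β² K)/(2(K−1)) ‖d‖², where d = μ − z_T and the second inequality uses the Gram structure of the regular simplex (the matrix V^T V with rows v_k has operator norm K/(K−1) on the relevant subspace). -/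
open Finset

/-!
Moving the code from `z_T` to `z_T + d` multiplies the teacher weights by `exp (β v_k·d)` and
renormalises, so `S (z_T + d)` is the exponential tilt of `T` by `δ_k = β v_k·d`, and the KL
divergence of `T` from its tilt is the centred log-moment-generating function
`log E_T[e^δ] - E_T[δ]`. Hoeffding's lemma bounds it by `r² / 2` for `|δ_k| ≤ r`, and
`r² = ∑ δ_k²` is admissible. For the second inequality, `a_k = v_k·d` sums to zero, so the Gram
structure gives `‖∑ a_k v_k‖² = (K/(K-1)) ∑ a_k²`, while `(∑ a_k v_k)·d = ∑ a_k²`;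
Cauchy–Schwarz then yields `∑ a_k² ≤ (K/(K-1)) ‖d‖²`.
-/

open Real ProbabilityTheory MeasureTheory

section Tilt

variable {ι : Type*} [Fintype ι]

noncomputable def softmax (a : ι → ℝ) : ι → ℝ := fun k => exp (a k) / ∑ j, exp (a j)

noncomputable def expTilt (T δ : ι → ℝ) : ι → ℝ :=
  fun k => T k * exp (δ k) / ∑ j, T j * exp (δ j)

theorem softmax_add (a δ : ι → ℝ) : softmax (a + δ) = expTilt (softmax a) δ := by
  ext k
  have hZ : (∑ j, exp (a j)) ≠ 0 := (sum_pos (fun j _ => exp_pos (a j)) ⟨k, mem_univ k⟩).ne'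
  simp only [softmax, expTilt, Pi.add_apply, exp_add, div_mul_eq_mul_div, ← sum_div]
  rw [div_div_div_cancel_right₀ hZ]

/-- Hoeffding's lemma for a finitely supported distribution `T`. -/
theorem log_sum_mul_exp_le (T δ : ι → ℝ) (hT0 : ∀ k, 0 ≤ T k) (hT1 : ∑ k, T k = 1) {r : ℝ}
    (hδ : ∀ k, |δ k| ≤ r) :
    log (∑ k, T k * exp (δ k)) ≤ ∑ k, T k * δ k + r ^ 2 / 2 := by
  let _ : MeasurableSpace ι := ⊤
  have : MeasurableSingletonClass ι := ⟨fun _ => trivial⟩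
  let p : PMF ι := PMF.ofFintype (fun k => ENNReal.ofReal (T k)) (by
    rw [← ENNReal.ofReal_sum_of_nonneg (fun k _ => hT0 k), hT1, ENNReal.ofReal_one])
  have hp (f : ι → ℝ) : ∫ k, f k ∂p.toMeasure = ∑ k, T k * f k := by
    simp [PMF.integral_eq_sum, p, ENNReal.toReal_ofReal (hT0 _)]
  have hmgf : mgf δ p.toMeasure 1 = ∑ k, T k * exp (δ k) := by simp [mgf, hp]
  have hoeffding := (hasSubgaussianMGF_of_mem_Icc (μ := p.toMeasure) (X := δ) (a := -r) (b := r)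
    (measurable_of_countable _).aemeasurable (ae_of_all _ fun k => abs_le.mp (hδ k))).mgf_le 1
  have hc : (((‖r + - -r‖₊ / 2) ^ 2 : NNReal) : ℝ) = r ^ 2 := by
    push_cast
    rw [Real.norm_eq_abs, neg_neg, ← two_mul, abs_mul, div_pow, mul_pow, sq_abs]
    norm_num
  simp_rw [sub_eq_add_neg, mgf_add_const, hp, hc] at hoeffding
  rw [← hmgf, log_le_iff_le_exp (mgf_pos Integrable.of_finite), exp_add,
    ← div_le_iff₀' (exp_pos _), div_eq_mul_inv, ← exp_neg]
  simpa using hoeffding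

end Tilt

theorem KL_expTilt {K : ℕ} (T δ : Fin K → ℝ) (hT0 : ∀ k, 0 ≤ T k) (hT1 : ∑ k, T k = 1) :
    KL T (expTilt T δ) = log (∑ k, T k * exp (δ k)) - ∑ k, T k * δ k := by
  simp only [KL, expTilt]
  set W := ∑ k, T k * exp (δ k)
  have hW : 0 < W := by
    obtain ⟨k, -, hk⟩ := exists_lt_of_sum_lt (by simp [hT1] : ∑ k, (0 : ℝ) < ∑ k, T k)
    exact sum_pos' (fun j _ => mul_nonneg (hT0 j) (exp_pos _).le)
      ⟨k, mem_univ k, mul_pos hk (exp_pos _)⟩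
  have hterm (k : Fin K) :
      T k * log (T k / (T k * exp (δ k) / W)) = T k * log W - T k * δ k := by
    rcases (hT0 k).eq_or_lt with hk | hk
    · simp [← hk]
    · rw [div_div_eq_mul_div, mul_div_mul_left _ _ hk.ne', log_div hW.ne' (exp_pos _).ne', log_exp]
      ring
  simp only [hterm, sum_sub_distrib, ← sum_mul, hT1, one_mul]

theorem KL_expTilt_le {K : ℕ} (T δ : Fin K → ℝ) (hT0 : ∀ k, 0 ≤ T k) (hT1 : ∑ k, T k = 1) :
    KL T (expTilt T δ) ≤ (1 / 2) * ∑ k, δ k ^ 2 := by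
  have hδ (k : Fin K) : |δ k| ≤ √(∑ j, δ j ^ 2) :=
    abs_le_sqrt (single_le_sum (fun j _ => sq_nonneg (δ j)) (mem_univ k))
  have := log_sum_mul_exp_le T δ hT0 hT1 hδ
  rw [KL_expTilt T δ hT0 hT1, sq_sqrt (sum_nonneg fun j _ => sq_nonneg (δ j))] at *
  linarith

section Gram

variable {ι : Type*} [Fintype ι] {n : ℕ} {v : ι → Fin n → ℝ} {c : ℝ}

theorem dot_eq_dotProduct (u w : Fin n → ℝ) : dot u w = u ⬝ᵥ w := rfl

theorem dotProduct_sum_smul_of_gram (hvnorm : ∀ i, dot (v i) (v i) = 1)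
    (hvcross : ∀ i j, i ≠ j → dot (v i) (v j) = c) {a : ι → ℝ} (ha : ∑ j, a j = 0) (k : ι) :
    v k ⬝ᵥ ∑ j, a j • v j = (1 - c) * a k := by
  classical
  have hgram (j : ι) : a j * (v k ⬝ᵥ v j) = c * a j + (if k = j then (1 - c) * a j else 0) := by
    by_cases hkj : k = j
    · simp [hkj, ← dot_eq_dotProduct, hvnorm]
      ring
    · simp [hkj, ← dot_eq_dotProduct, hvcross k j hkj, mul_comm]
  simp only [dotProduct_sum, dotProduct_smul, smul_eq_mul, hgram, sum_add_distrib, ← mul_sum, ha,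
    sum_ite_eq, mem_univ, if_true, mul_zero, zero_add]

theorem sum_dot_sq_le_of_gram (hc : c ≤ 1) (hvsum : ∑ k, v k = 0)
    (hvnorm : ∀ i, dot (v i) (v i) = 1) (hvcross : ∀ i j, i ≠ j → dot (v i) (v j) = c)
    (d : Fin n → ℝ) :
    ∑ k, dot (v k) d ^ 2 ≤ (1 - c) * ∑ i, d i ^ 2 := by
  set a : ι → ℝ := fun k => dot (v k) d
  set w := ∑ k, a k • v k
  have ha : ∑ k, a k = 0 := by
    simp only [a, dot_eq_dotProduct, ← sum_dotProduct, hvsum, zero_dotProduct]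
  have hww : ∑ i, w i ^ 2 = (1 - c) * ∑ k, a k ^ 2 := by
    calc ∑ i, w i ^ 2 = (∑ k, a k • v k) ⬝ᵥ w := by simp only [dotProduct, sq, w]
      _ = (1 - c) * ∑ k, a k ^ 2 := by
        simp only [sum_dotProduct, smul_dotProduct, smul_eq_mul, mul_sum]
        exact sum_congr rfl fun k _ => by rw [dotProduct_sum_smul_of_gram hvnorm hvcross ha]; ring
  have hwd : ∑ i, w i * d i = ∑ k, a k ^ 2 := by
    calc ∑ i, w i * d i = (∑ k, a k • v k) ⬝ᵥ d := rfl
      _ = ∑ k, a k ^ 2 := by simp only [sum_dotProduct, smul_dotProduct, smul_eq_mul, sq]; rfl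
  have hCS := sum_mul_sq_le_sq_mul_sq univ w d
  rw [hww, hwd] at hCS
  have hS : 0 ≤ ∑ k, a k ^ 2 := sum_nonneg fun k _ => sq_nonneg (a k)
  have hD : 0 ≤ ∑ i, d i ^ 2 := sum_nonneg fun i _ => sq_nonneg (d i)
  nlinarith [mul_nonneg (sub_nonneg.mpr hc) hD]

end Gram

theorem alignment_distance_bound_general {K dz : ℕ} (hK : 2 ≤ K)
    (β : ℝ)
    (v : Fin K → Fin dz → ℝ)
    (hvsum : ∑ k, v k = 0)
    (hvnorm : ∀ i, dot (v i) (v i) = 1)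
    (hvcross : ∀ i j, i ≠ j → dot (v i) (v j) = -1 / ((K : ℝ) - 1))
    (T Tbar : Fin K → ℝ)
    (hT0 : ∀ k, 0 < T k) (hT1 : ∑ k, T k = 1)
    (S : (Fin dz → ℝ) → Fin K → ℝ)
    (hS : ∀ z k, S z k =
      Real.exp (β * dot (v k) z + Real.log (Tbar k)) /
        ∑ j, Real.exp (β * dot (v j) z + Real.log (Tbar j)))
    (zT : Fin dz → ℝ) (hzT : ∀ k, S zT k = T k)
    (d : Fin dz → ℝ) :
    KL T (S (zT + d)) ≤ (β ^ 2 / 2) * ∑ k, (dot (v k) d) ^ 2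
      ∧ (β ^ 2 / 2) * ∑ k, (dot (v k) d) ^ 2
          ≤ (β ^ 2 * (K : ℝ)) / (2 * ((K : ℝ) - 1)) * ∑ i, (d i) ^ 2 := by
  set δ : Fin K → ℝ := fun k => β * dot (v k) d
  have hsoftmax (z : Fin dz → ℝ) :
      S z = softmax (fun k => β * dot (v k) z + log (Tbar k)) := funext (hS z)
  have htilt : S (zT + d) = expTilt T δ := by
    rw [← funext hzT, hsoftmax, hsoftmax, ← softmax_add]
    congr 1
    ext k
    simp only [δ, Pi.add_apply, dot_eq_dotProduct, dotProduct_add]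
    ring
  have hK1 : (0 : ℝ) < K - 1 := by
    have : (2 : ℝ) ≤ K := by exact_mod_cast hK
    linarith
  have hgram := sum_dot_sq_le_of_gram
    ((div_neg_of_neg_of_pos (by norm_num) hK1).le.trans zero_le_one) hvsum hvnorm hvcross d
  constructor
  · calc KL T (S (zT + d)) ≤ (1 / 2) * ∑ k, δ k ^ 2 :=
          htilt ▸ KL_expTilt_le T δ (fun k => (hT0 k).le) hT1
      _ = (β ^ 2 / 2) * ∑ k, dot (v k) d ^ 2 := by simp only [δ, mul_pow, ← mul_sum]; ring
  · calc (β ^ 2 / 2) * ∑ k, dot (v k) d ^ 2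
        ≤ (β ^ 2 / 2) * ((1 - -1 / ((K : ℝ) - 1)) * ∑ i, d i ^ 2) :=
          mul_le_mul_of_nonneg_left hgram (by positivity)
      _ = (β ^ 2 * (K : ℝ)) / (2 * ((K : ℝ) - 1)) * ∑ i, d i ^ 2 := by
        field_simp
        ring

/-- Distance-to-target bound: for the simplex witness `S` with gain `β` and `d = μ − z_T`,
`KL(T ‖ S(z_T + d)) ≤ (β²/2) ∑_k (v_k·d)² ≤ (β² K)/(2(K−1)) ‖d‖²`. -/
theorem alignment_distance_bound {K dz : ℕ} (hK : 2 ≤ K)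
    (β : ℝ) (hβ : 0 < β)
    (v : Fin K → Fin dz → ℝ)
    (hvsum : ∑ k, v k = 0)
    (hvnorm : ∀ i, dot (v i) (v i) = 1)
    (hvcross : ∀ i j, i ≠ j → dot (v i) (v j) = -1 / ((K : ℝ) - 1))
    (T Tbar : Fin K → ℝ)
    (hT0 : ∀ k, 0 < T k) (hT1 : ∑ k, T k = 1)
    (hTbar0 : ∀ k, 0 < Tbar k) (hTbar1 : ∑ k, Tbar k = 1)
    (S : (Fin dz → ℝ) → Fin K → ℝ)
    (hS : ∀ z k, S z k =
      Real.exp (β * dot (v k) z + Real.log (Tbar k)) /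
        ∑ j, Real.exp (β * dot (v j) z + Real.log (Tbar j)))
    (zT : Fin dz → ℝ) (hzT : ∀ k, S zT k = T k)
    (d : Fin dz → ℝ) :
    KL T (S (zT + d)) ≤ (β ^ 2 / 2) * ∑ k, (dot (v k) d) ^ 2
      ∧ (β ^ 2 / 2) * ∑ k, (dot (v k) d) ^ 2
          ≤ (β ^ 2 * (K : ℝ)) / (2 * ((K : ℝ) - 1)) * ∑ i, (d i) ^ 2 :=
  alignment_distance_bound_general hK β v hvsum hvnorm hvcross T Tbar hT0 hT1 S hS zT hzT d
end
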